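/- arXiv:math/0609828 — 4 statements merged into one kernel-verified Lean document; each statement's English description precedes it below -/
import Mathlib

section
/- Let $(A,A+1,\dots,B)$ and $(C,C+1,\dots,D)$ be two strings of consecutive real numbers with $A - C \in \mathbb{Z}$. If the two strings are not nested, i.e. neither one's interval contains the other's and they are not separated by a gap of more than 1 (so either $A < C \le B < D$, or $C = B+1$, up to swapping the strings), then the multiset of entries of the two strings can be rearranged into two new strings $(A,\dots,D)$ and $(C,\dots,B)$ (in the overlapping case) or into the single string $(A,\dots,B,B+1,\dots,D)$ (in the adjacent case), whose lengths strictly dominate the original pair of lengths in the dominance order. -/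
/-!
A string of length `m + n` starting at `a` is the concatenation of the strings of lengths `m`
and `n` starting at `a` and at `a + m`. In the overlapping case both strings start with the
common block `(A, …, C - 1)`; exchanging their tails `(C, …, B)` and `(C, …, D)` preserves the
multiset of entries and makes the first string strictly longer. In the adjacent case the two
strings concatenate. The dominance inequalities are then linear arithmetic.
-/

/-- The multiset of entries of the string `(a, a+1, …, a+ℓ-1)`. -/
def strM (a : ℝ) (ℓ : ℕ) : Multiset ℝ := (Multiset.range ℓ).map (fun j => a + j)

/-- In `strM` the cast `ℕ → ℝ` of the entries is elaborated as a monadic bind on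
`Multiset.range ℓ`; this restates it as a single `map`. -/
lemma strM_eq_map (a : ℝ) (ℓ : ℕ) :
    strM a ℓ = (Multiset.range ℓ).map (fun j : ℕ => a + (j : ℝ)) := by
  simp [strM, Multiset.map_map]

lemma strM_add (a : ℝ) (m n : ℕ) : strM a (m + n) = strM a m + strM (a + m) n := by
  simp only [strM_eq_map, Multiset.range_add, Multiset.map_add, Multiset.map_map,
    Function.comp_def, Nat.cast_add, add_assoc]

lemma strM_add_strM_swap_tails (a : ℝ) (d m n : ℕ) :
    strM a (d + m) + strM (a + d) n = strM a (d + n) + strM (a + d) m := by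
  rw [strM_add, strM_add]
  abel

theorem stmt_1_general (A : ℝ) (ℓ₁ ℓ₂ d : ℕ) (h2 : 1 ≤ ℓ₂) (hd : 1 ≤ d) :
    (d < ℓ₁ ∧ ℓ₁ < d + ℓ₂ →
      strM A ℓ₁ + strM (A + d) ℓ₂ = strM A (d + ℓ₂) + strM (A + d) (ℓ₁ - d) ∧
        max ℓ₁ ℓ₂ < max (d + ℓ₂) (ℓ₁ - d)) ∧
    (d = ℓ₁ →
      strM A ℓ₁ + strM (A + d) ℓ₂ = strM A (ℓ₁ + ℓ₂) ∧ max ℓ₁ ℓ₂ < ℓ₁ + ℓ₂) := by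
  constructor
  · rintro ⟨hdℓ₁, hℓ₁⟩
    refine ⟨?_, by omega⟩
    conv_lhs => rw [← Nat.add_sub_of_le hdℓ₁.le]
    exact strM_add_strM_swap_tails A d (ℓ₁ - d) ℓ₂
  · rintro rfl
    exact ⟨(strM_add A d ℓ₂).symm, by omega⟩

/-- Two strings `(A,…,B)` (length `ℓ₁`) and `(C,…,D)` (length `ℓ₂`) with
`C = A + d`, `d ∈ ℤ`, `d ≥ 1` (so `A < C`, up to swapping the strings).  If they are not
nested, i.e. `A < C ≤ B < D` (overlapping case, `d < ℓ₁` and `ℓ₁ < d + ℓ₂`) or `C = B + 1`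
(adjacent case, `d = ℓ₁`), then the multiset of entries rearranges into the strings
`(A,…,D)` and `(C,…,B)`, resp. the single string `(A,…,D)`, whose lengths strictly dominate
the original pair of lengths in the dominance order (same total, strictly larger maximum). -/
theorem stmt_1 (A : ℝ) (ℓ₁ ℓ₂ d : ℕ) (h1 : 1 ≤ ℓ₁) (h2 : 1 ≤ ℓ₂) (hd : 1 ≤ d) :
    (d < ℓ₁ ∧ ℓ₁ < d + ℓ₂ →
      strM A ℓ₁ + strM (A + d) ℓ₂ = strM A (d + ℓ₂) + strM (A + d) (ℓ₁ - d) ∧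
        max ℓ₁ ℓ₂ < max (d + ℓ₂) (ℓ₁ - d)) ∧
    (d = ℓ₁ →
      strM A ℓ₁ + strM (A + d) ℓ₂ = strM A (ℓ₁ + ℓ₂) ∧ max ℓ₁ ℓ₂ < ℓ₁ + ℓ₂) :=
  stmt_1_general A ℓ₁ ℓ₂ d h2 hd
end

section
/- Given a finite multiset of real numbers all congruent to each other modulo $\mathbb{Z}$, the following greedy procedure produces a nested set of strings: repeatedly extract the longest string (maximal sequence of consecutive values, each taken once) starting with the smallest remaining element, until no elements remain. Moreover, up to reordering of strings, this is the unique decomposition of the multiset into nested strings. -/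
/-- The multiset of entries of a string given by its start and its length. -/
def strEntries (s : ℝ × ℕ) : Multiset ℝ := (Multiset.range s.2).map (fun j => s.1 + j)

/-- The multiset of all entries of a collection of strings. -/
def entries (D : Multiset (ℝ × ℕ)) : Multiset ℝ := D.bind strEntries

/-- A collection of strings is nested if for any two of them whose entries differ by
integers, with endpoints `(a₁,b₁)` and `(a₂,b₂)` (where `b = a + ℓ - 1`), one has
`a₁ ≤ a₂ ≤ b₂ ≤ b₁`, or `a₂ ≤ a₁ ≤ b₁ ≤ b₂`, or `b₁ + 1 < a₂`, or `b₂ + 1 < a₁`. -/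
def NestedD (D : Multiset (ℝ × ℕ)) : Prop :=
  ∀ s ∈ D, ∀ t ∈ D, (∃ z : ℤ, s.1 - t.1 = (z : ℝ)) →
    (s.1 ≤ t.1 ∧ t.1 + (t.2 : ℝ) ≤ s.1 + (s.2 : ℝ)) ∨
    (t.1 ≤ s.1 ∧ s.1 + (s.2 : ℝ) ≤ t.1 + (t.2 : ℝ)) ∨
    (s.1 + (s.2 : ℝ) < t.1) ∨ (t.1 + (t.2 : ℝ) < s.1)

/-!
Let `a` be the least element of `M` and `ℓ` the least `n` with `a + n ∉ M`. In every nested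
decomposition of `M` into nonempty strings, take a string `t` of maximal length `m` among those
starting at `a`. Nestedness forbids any string from containing `a + m` (it would either overlap
`t` without containing it, or start at `a` and be longer than `t`), while `a, …, a + m - 1` are
entries of `t`; hence `m = ℓ`, so the greedy string `(a, ℓ)` occurs in every nested
decomposition. Conversely, `(a, ℓ)` can be added to any nested decomposition of what is left,
since every remaining string starts at or after `a` and avoids `a + ℓ`. Strong induction on `M`
gives existence and uniqueness.
-/

def IsNestedDecomposition (M : Multiset ℝ) (D : Multiset (ℝ × ℕ)) : Prop :=
  (∀ s ∈ D, 0 < s.2) ∧ entries D = M ∧ NestedD D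

section Strings

/-- Not `rfl`: `strEntries` elaborates through the monadic coercion `Multiset ℕ → Multiset ℝ`. -/
lemma strEntries_eq_map (s : ℝ × ℕ) :
    strEntries s = (Multiset.range s.2).map (fun j : ℕ => s.1 + j) := by
  simp [strEntries]

lemma mem_strEntries {s : ℝ × ℕ} {x : ℝ} :
    x ∈ strEntries s ↔ ∃ j : ℕ, j < s.2 ∧ s.1 + j = x := by
  simp [strEntries_eq_map]

lemma nodup_strEntries (s : ℝ × ℕ) : (strEntries s).Nodup :=
  strEntries_eq_map s ▸ (Multiset.nodup_range s.2).map fun i j h => by simpa using h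

lemma start_mem_strEntries {s : ℝ × ℕ} (h : 0 < s.2) : s.1 ∈ strEntries s :=
  mem_strEntries.2 ⟨0, h, by simp⟩

lemma mem_strEntries_of_sub_eq_intCast {s : ℝ × ℕ} {x : ℝ} {z : ℤ} (hz : x - s.1 = z)
    (h₁ : s.1 ≤ x) (h₂ : x < s.1 + s.2) : x ∈ strEntries s := by
  lift z to ℕ using (by exact_mod_cast hz ▸ sub_nonneg.2 h₁)
  refine mem_strEntries.2 ⟨z, ?_, by push_cast at hz; linarith⟩
  exact_mod_cast (show (z : ℝ) < s.2 by push_cast at hz; linarith)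

lemma mem_entries {D : Multiset (ℝ × ℕ)} {x : ℝ} :
    x ∈ entries D ↔ ∃ s ∈ D, x ∈ strEntries s :=
  Multiset.mem_bind

lemma entries_cons (s : ℝ × ℕ) (D : Multiset (ℝ × ℕ)) :
    entries (s ::ₘ D) = strEntries s + entries D :=
  Multiset.cons_bind _ _ _

end Strings

section Greedy

lemma exists_add_natCast_notMem (M : Multiset ℝ) (a : ℝ) : ∃ n : ℕ, a + n ∉ M := by
  by_contra! h
  have hsub : Set.range (fun n : ℕ => a + n) ⊆ {x | x ∈ M} := by
    rintro _ ⟨n, rfl⟩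
    exact h n
  exact (Set.infinite_range_of_injective fun i j hij => by simpa using hij).mono hsub
    M.finite_toSet

noncomputable def greedyLength (M : Multiset ℝ) (a : ℝ) : ℕ :=
  Nat.find (exists_add_natCast_notMem M a)

variable {M : Multiset ℝ} {a : ℝ}

lemma add_greedyLength_notMem : a + greedyLength M a ∉ M :=
  Nat.find_spec (exists_add_natCast_notMem M a)

lemma add_natCast_mem_of_lt_greedyLength {j : ℕ} (hj : j < greedyLength M a) : a + j ∈ M :=
  not_not.1 (Nat.find_min _ hj)

lemma greedyLength_eq {m : ℕ} (hlt : ∀ j < m, a + j ∈ M) (hm : a + m ∉ M) :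
    greedyLength M a = m :=
  (Nat.find_eq_iff _).2 ⟨hm, fun j hj => not_not.2 (hlt j hj)⟩

lemma greedyLength_pos (ha : a ∈ M) : 0 < greedyLength M a :=
  Nat.pos_of_ne_zero fun h => add_greedyLength_notMem (M := M) (a := a) (by simpa [h] using ha)

lemma strEntries_greedy_le : strEntries (a, greedyLength M a) ≤ M := by
  refine (Multiset.le_iff_subset (nodup_strEntries _)).2 fun x hx => ?_
  obtain ⟨j, hj, rfl⟩ := mem_strEntries.1 hx
  exact add_natCast_mem_of_lt_greedyLength hj

lemma sub_strEntries_greedy_lt (ha : a ∈ M) : M - strEntries (a, greedyLength M a) < M := by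
  have hpos : 0 < strEntries (a, greedyLength M a) := by
    have := start_mem_strEntries (s := (a, greedyLength M a)) (greedyLength_pos ha)
    exact pos_iff_ne_zero.2 fun h => by simp [h] at this
  conv_rhs => rw [← add_tsub_cancel_of_le (strEntries_greedy_le (M := M) (a := a))]
  exact lt_add_of_pos_left _ hpos

end Greedy

section Nested

lemma NestedD.mono {D D' : Multiset (ℝ × ℕ)} (hD : NestedD D) (h : D' ⊆ D) : NestedD D' :=
  fun s hs t ht => hD s (h hs) t (h ht)

lemma NestedD.cons {D : Multiset (ℝ × ℕ)} (hD : NestedD D) {a : ℝ} {ℓ : ℕ}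
    (hstart : ∀ t ∈ D, a ≤ t.1) (hend : ∀ t ∈ D, a + ℓ ∉ strEntries t) :
    NestedD ((a, ℓ) ::ₘ D) := by
  have hfits : ∀ t ∈ D, ∀ z : ℤ, t.1 - a = z → t.1 + t.2 ≤ a + ℓ ∨ a + ℓ < t.1 := by
    intro t ht z hz
    by_contra! h
    exact hend t ht
      (mem_strEntries_of_sub_eq_intCast (z := ℓ - z) (by push_cast; linarith) h.2 h.1)
  intro s hs t ht ⟨z, hz⟩
  rcases Multiset.mem_cons.1 hs with rfl | hs <;> rcases Multiset.mem_cons.1 ht with rfl | ht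
  · exact Or.inl ⟨le_rfl, le_rfl⟩
  · rcases hfits t ht (-z) (by push_cast; linarith) with h | h
    · exact Or.inl ⟨hstart t ht, h⟩
    · exact Or.inr (Or.inr (Or.inl h))
  · rcases hfits s hs z hz with h | h
    · exact Or.inr (Or.inl ⟨hstart s hs, h⟩)
    · exact Or.inr (Or.inr (Or.inr h))
  · exact hD s hs t ht ⟨z, hz⟩

lemma NestedD.end_notMem_strEntries {D : Multiset (ℝ × ℕ)} (hD : NestedD D) {t u : ℝ × ℕ}
    (ht : t ∈ D) (hu : u ∈ D) (hmax : ∀ v ∈ D, v.1 = t.1 → v.2 ≤ t.2) (hle : t.1 ≤ u.1) :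
    t.1 + t.2 ∉ strEntries u := by
  intro hmem
  obtain ⟨j, hj, hju⟩ := mem_strEntries.1 hmem
  have hj' : (j : ℝ) < u.2 := by exact_mod_cast hj
  have hj0 : (0 : ℝ) ≤ j := j.cast_nonneg
  rcases hD t ht u hu ⟨j - t.2, by push_cast; linarith⟩ with ⟨-, h⟩ | ⟨h, -⟩ | h | h
  · linarith
  · have hut : u.2 ≤ t.2 := hmax u hu (le_antisymm h hle)
    have : (j : ℝ) = t.2 := by linarith [le_antisymm h hle]
    exact absurd (show j = t.2 by exact_mod_cast this) (by omega)
  · linarith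
  · linarith [u.2.cast_nonneg (α := ℝ)]

end Nested

namespace IsNestedDecomposition

variable {M : Multiset ℝ} {D : Multiset (ℝ × ℕ)}

lemma zero : IsNestedDecomposition 0 0 :=
  ⟨by simp, by simp [entries], fun _ hs => by simp at hs⟩

lemma start_mem (hD : IsNestedDecomposition M D) {s : ℝ × ℕ} (hs : s ∈ D) : s.1 ∈ M :=
  hD.2.1 ▸ mem_entries.2 ⟨s, hs, start_mem_strEntries (hD.1 s hs)⟩

lemma eq_zero (hD : IsNestedDecomposition 0 D) : D = 0 :=
  Multiset.eq_zero_of_forall_notMem fun _ hs => Multiset.notMem_zero _ (hD.start_mem hs)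

lemma erase (hD : IsNestedDecomposition M D) {s : ℝ × ℕ} (hs : s ∈ D) :
    IsNestedDecomposition (M - strEntries s) (D.erase s) := by
  refine ⟨fun t ht => hD.1 t (Multiset.mem_of_mem_erase ht), ?_,
    hD.2.2.mono (Multiset.erase_subset _ _)⟩
  rw [← hD.2.1, ← Multiset.cons_erase hs, entries_cons, Multiset.cons_erase hs,
    add_tsub_cancel_left]

lemma cons_greedy {a : ℝ} (hD : IsNestedDecomposition (M - strEntries (a, greedyLength M a)) D)
    (ha : a ∈ M) (hmin : ∀ x ∈ M, a ≤ x) :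
    IsNestedDecomposition M ((a, greedyLength M a) ::ₘ D) := by
  have hsub : ∀ {x}, x ∈ entries D → x ∈ M := fun hx =>
    Multiset.mem_of_le tsub_le_self (hD.2.1 ▸ hx)
  refine ⟨fun s hs => ?_, ?_, hD.2.2.cons ?_ ?_⟩
  · rcases Multiset.mem_cons.1 hs with rfl | hs
    exacts [greedyLength_pos ha, hD.1 s hs]
  · rw [entries_cons, hD.2.1, add_tsub_cancel_of_le strEntries_greedy_le]
  · exact fun t ht => hmin _ (hsub (hD.2.1 ▸ hD.start_mem ht))
  · exact fun t ht hmem => add_greedyLength_notMem (hsub (mem_entries.2 ⟨t, ht, hmem⟩))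

lemma greedy_mem (hD : IsNestedDecomposition M D) {a : ℝ} (ha : a ∈ M)
    (hmin : ∀ x ∈ M, a ≤ x) : (a, greedyLength M a) ∈ D := by
  obtain ⟨s, hsD, has⟩ := mem_entries.1 (hD.2.1 ▸ ha)
  have hs₁ : s.1 = a := by
    obtain ⟨j, -, hj⟩ := mem_strEntries.1 has
    exact le_antisymm (by linarith [j.cast_nonneg (α := ℝ)]) (hmin _ (hD.start_mem hsD))
  have hsF : s ∈ D.filter (·.1 = a) := Multiset.mem_filter.2 ⟨hsD, hs₁⟩
  obtain ⟨t, htF, hmaxF⟩ := Multiset.exists_max_image (s := D.filter (·.1 = a)) Prod.snd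
    fun h => by simp [h] at hsF
  obtain ⟨htD, ht₁⟩ := Multiset.mem_filter.1 htF
  have hmax : ∀ v ∈ D, v.1 = t.1 → v.2 ≤ t.2 := fun v hv hv₁ =>
    hmaxF v (Multiset.mem_filter.2 ⟨hv, hv₁.trans ht₁⟩)
  have hlen : greedyLength M a = t.2 := by
    refine greedyLength_eq (fun j hj => ?_) fun hmem => ?_
    · exact hD.2.1 ▸ mem_entries.2 ⟨t, htD, mem_strEntries.2 ⟨j, hj, by rw [ht₁]⟩⟩
    · obtain ⟨u, hu, hmemu⟩ := mem_entries.1 (hD.2.1 ▸ hmem)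
      refine hD.2.2.end_notMem_strEntries htD hu hmax ?_ (by rwa [ht₁])
      exact ht₁ ▸ hmin _ (hD.start_mem hu)
  rwa [hlen, ← ht₁]

theorem unique {D₁ D₂ : Multiset (ℝ × ℕ)} (h₁ : IsNestedDecomposition M D₁)
    (h₂ : IsNestedDecomposition M D₂) : D₁ = D₂ := by
  induction M using Multiset.strongInductionOn generalizing D₁ D₂ with
  | ih M ih =>
  rcases eq_or_ne M 0 with rfl | hM
  · rw [h₁.eq_zero, h₂.eq_zero]
  obtain ⟨a, ha, hmin⟩ := M.exists_min_image id hM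
  have hs₁ := h₁.greedy_mem ha hmin
  have hs₂ := h₂.greedy_mem ha hmin
  rw [← Multiset.cons_erase hs₁, ← Multiset.cons_erase hs₂,
    ih _ (sub_strEntries_greedy_lt ha) (h₁.erase hs₁) (h₂.erase hs₂)]

end IsNestedDecomposition

theorem exists_isNestedDecomposition (M : Multiset ℝ) : ∃ D, IsNestedDecomposition M D := by
  induction M using Multiset.strongInductionOn with
  | ih M ih =>
  rcases eq_or_ne M 0 with rfl | hM
  · exact ⟨0, .zero⟩
  obtain ⟨a, ha, hmin⟩ := M.exists_min_image id hM
  obtain ⟨D, hD⟩ := ih _ (sub_strEntries_greedy_lt ha)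
  exact ⟨_, hD.cons_greedy ha hmin⟩

theorem stmt_2_general (M : Multiset ℝ) :
    (∃ D : Multiset (ℝ × ℕ), (∀ s ∈ D, 0 < s.2) ∧ entries D = M ∧ NestedD D) ∧
    (∀ D₁ D₂ : Multiset (ℝ × ℕ),
      (∀ s ∈ D₁, 0 < s.2) → entries D₁ = M → NestedD D₁ →
      (∀ s ∈ D₂, 0 < s.2) → entries D₂ = M → NestedD D₂ → D₁ = D₂) :=
  ⟨exists_isNestedDecomposition M, fun _ _ hp₁ he₁ hn₁ hp₂ he₂ hn₂ =>
    IsNestedDecomposition.unique ⟨hp₁, he₁, hn₁⟩ ⟨hp₂, he₂, hn₂⟩⟩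

/-- a finite multiset of real numbers, all congruent to each other modulo ℤ,
admits a decomposition into a nested set of strings (the one produced by the greedy
procedure of repeatedly extracting the longest string starting with the smallest remaining
element), and moreover this nested decomposition is unique up to reordering of the strings
(i.e. unique as a multiset of strings). -/
theorem stmt_2 (M : Multiset ℝ) (hM : ∀ x ∈ M, ∀ y ∈ M, ∃ z : ℤ, x - y = (z : ℝ)) :
    (∃ D : Multiset (ℝ × ℕ), (∀ s ∈ D, 0 < s.2) ∧ entries D = M ∧ NestedD D) ∧
    (∀ D₁ D₂ : Multiset (ℝ × ℕ),
      (∀ s ∈ D₁, 0 < s.2) → entries D₁ = M → NestedD D₁ →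
      (∀ s ∈ D₂, 0 < s.2) → entries D₂ = M → NestedD D₂ → D₁ = D₂) :=
  stmt_2_general M
end

section
/- Branching rule for $U(n)$: the restriction of the irreducible representation of $U(n)$ with highest weight $\mu(a_1,\dots,a_n)$ (integers, $a_1 \ge \cdots \ge a_n$) to $U(n-1)\times U(1)$ is the multiplicity-free sum of $\mu(b_1,\dots,b_{n-1}) \otimes \mu(b_n)$ over all integer sequences with $a_1 \ge b_1 \ge a_2 \ge b_2 \ge \cdots \ge b_{n-1} \ge a_n$ and $b_n = \sum_{i=1}^n a_i - \sum_{j=1}^{n-1} b_j$. -/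
/-!
Write `t` for the last eigenvalue. Scaling all eigenvalues by `t⁻¹` reduces to `t = 1`, where
the last row of the alternant `det (x_i ^ (a_j + n - j))` consists of ones. Subtracting
neighbouring columns and expanding along that row leaves an `n × n` determinant whose entries
are geometric sums
`x_i ^ (a_j + n - j) - x_i ^ (a_{j+1} + n - j - 1) = (x_i - 1) ∑_{a_{j+1} ≤ c ≤ a_j} x_i ^ (c + n - 1 - j)`.
Pulling out the row factors `x_i - 1` and expanding the column sums multilinearly gives the sum,
over all interlacing `b`, of the alternants of `U(n)`. The factor `∏ (x_i - t)` is the same for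
the Weyl denominator (the case `a = 0`), so it cancels in the character.
-/

noncomputable section

/-- The character of the irreducible representation of `U(m)` with highest weight
`a : Fin m → ℤ` (weakly decreasing), evaluated at a diagonal element with eigenvalues
`x : Fin m → ℂ`, via the Weyl (bialternant) character formula:
`s_a(x) = det(x_i^{a_j + m - 1 - j}) / det(x_i^{m - 1 - j})`. -/
def schurChar (m : ℕ) (x : Fin m → ℂ) (a : Fin m → ℤ) : ℂ :=
  Matrix.det (Matrix.of fun i j : Fin m => x i ^ (a j + ((m : ℤ) - 1 - (j : ℕ)))) /
    Matrix.det (Matrix.of fun i j : Fin m => x i ^ ((m : ℤ) - 1 - (j : ℕ)))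

open Finset

namespace Matrix

variable {R : Type*} [CommRing R]

theorem det_eq_det_sub_succ_of_row_last_eq_one {n : ℕ}
    (M : Matrix (Fin (n + 1)) (Fin (n + 1)) R) (hM : ∀ j, M (Fin.last n) j = 1) :
    M.det = det (of fun i j : Fin n => M i.castSucc j.castSucc - M i.castSucc j.succ) := by
  -- subtracting from each column its left neighbour turns the last row into `(1, 0, …, 0)`
  let B : Matrix (Fin (n + 1)) (Fin (n + 1)) R :=
    of fun i => Fin.cases (M i 0) fun j => M i j.succ - M i j.castSucc
  have hMB : M.det = B.det :=
    det_eq_of_forall_col_eq_smul_add_pred (fun _ => 1) (fun _ => rfl) fun _ _ => by simp [B]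
  have hB : B.det =
      (-1) ^ n * det (of fun i j : Fin n => M i.castSucc j.succ - M i.castSucc j.castSucc) := by
    rw [det_succ_row B (Fin.last n), Fin.sum_univ_succ, sum_eq_zero fun j _ => by simp [B, hM]]
    simp [B, hM, Fin.succAbove_last]
    rfl
  have hneg : (of fun i j : Fin n => M i.castSucc j.succ - M i.castSucc j.castSucc) =
      -of fun i j : Fin n => M i.castSucc j.castSucc - M i.castSucc j.succ := by
    ext; simp
  rw [hMB, hB, hneg, det_neg, Fintype.card_fin, ← mul_assoc, ← pow_add,
    Even.neg_one_pow ⟨n, rfl⟩, one_mul]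

theorem det_of_sum_eq_sum_piFinset {ι κ : Type*} [Fintype ι] [DecidableEq ι] [DecidableEq κ]
    (s : ι → Finset κ) (f : ι → ι → κ → R) :
    det (of fun i j => ∑ c ∈ s j, f i j c) =
      ∑ b ∈ Fintype.piFinset s, det (of fun i j => f i j (b j)) :=
  calc det (of fun i j => ∑ c ∈ s j, f i j c)
      = detRowAlternating fun j => ∑ c ∈ s j, fun i => f i j c := by
        rw [← det_transpose]; refine congrArg det ?_; ext; simp [Finset.sum_apply]
    _ = ∑ b ∈ Fintype.piFinset s, detRowAlternating fun j i => f i j (b j) :=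
        detRowAlternating.toMultilinearMap.map_sum_finset _ s
    _ = _ := sum_congr rfl fun _ _ => det_transpose _

end Matrix

theorem prod_zpow_eq_zpow_sum₀ {G ι : Type*} [CommGroupWithZero G] (s : Finset ι) {c : G}
    (hc : c ≠ 0) (e : ι → ℤ) : ∏ j ∈ s, c ^ e j = c ^ (∑ j ∈ s, e j) := by
  classical
  induction s using Finset.induction_on with
  | empty => simp
  | insert j s hj ih => rw [prod_insert hj, sum_insert hj, ih, zpow_add₀ hc]

theorem geom_sum_Ico_zpow_mul {K : Type*} [DivisionRing K] {x : K} (hx : x ≠ 0) {m n : ℤ}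
    (hmn : m ≤ n) : (∑ i ∈ Ico m n, x ^ i) * (x - 1) = x ^ n - x ^ m := by
  induction n, hmn using Int.leInduction with
  | base => simp
  | succ n hmn ih =>
    rw [Ico_add_one_right_eq_Icc, ← Ico_insert_right hmn, sum_insert right_notMem_Ico, add_mul,
      ih, zpow_add_one₀ hx]
    noncomm_ring

section Alternant

variable {K : Type*} [Field K]

theorem zpow_sub_zpow_eq_sub_one_mul_sum_Icc {x : K} (hx : x ≠ 0) {p q : ℤ} (hpq : p ≤ q + 1)
    (s : ℤ) : x ^ (q + 1 + s) - x ^ (p + s) = (x - 1) * ∑ c ∈ Icc p q, x ^ (c + s) := by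
  simp only [zpow_add₀ hx _ s, ← sum_mul, ← Ico_add_one_right_eq_Icc]
  linear_combination -x ^ s * geom_sum_Ico_zpow_mul hx hpq

def alternant {m : ℕ} (x : Fin m → K) (e : Fin m → ℤ) : K :=
  (Matrix.of fun i j => x i ^ e j).det

def staircase (m : ℕ) : Fin m → ℤ := fun j => (m : ℤ) - 1 - (j : ℕ)

def interlacing {n : ℕ} (a : Fin (n + 1) → ℤ) : Finset (Fin n → ℤ) :=
  Fintype.piFinset fun j => Icc (a j.succ) (a j.castSucc)

theorem schurChar_eq_alternant_div (m : ℕ) (x : Fin m → ℂ) (a : Fin m → ℤ) :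
    schurChar m x a = alternant x (a + staircase m) / alternant x (staircase m) := rfl

theorem sum_staircase_succ (n : ℕ) : ∑ j, staircase (n + 1) j = ∑ j, staircase n j + n := by
  simp only [Fin.sum_univ_castSucc, staircase, Fin.val_castSucc, Fin.val_last, sum_sub_distrib,
    sum_const, card_univ, Fintype.card_fin]
  push_cast; ring

theorem alternant_const_mul {m : ℕ} {c : K} (hc : c ≠ 0) (x : Fin m → K) (e : Fin m → ℤ) :
    alternant (fun i => c * x i) e = c ^ (∑ j, e j) * alternant x e := by
  simp only [alternant, mul_zpow]
  rw [← prod_zpow_eq_zpow_sum₀ _ hc]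
  exact Matrix.det_mul_row _ (Matrix.of fun i j => x i ^ e j)

theorem alternant_add_staircase_of_last_eq_one {n : ℕ} {y : Fin (n + 1) → K}
    (hy : y (Fin.last n) = 1) (hy0 : ∀ i : Fin n, y i.castSucc ≠ 0) {a : Fin (n + 1) → ℤ}
    (ha : Antitone a) :
    alternant y (a + staircase (n + 1)) = (∏ i : Fin n, (y i.castSucc - 1)) *
      ∑ b ∈ interlacing a, alternant (fun i => y i.castSucc) (b + staircase n) := by
  set e := a + staircase (n + 1)
  have hentry : ∀ i j : Fin n, y i.castSucc ^ e j.castSucc - y i.castSucc ^ e j.succ =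
      (y i.castSucc - 1) *
        ∑ c ∈ Icc (a j.succ) (a j.castSucc), y i.castSucc ^ (c + staircase n j) := by
    intro i j
    have hcs : e j.castSucc = a j.castSucc + 1 + staircase n j := by simp [e, staircase]; ring
    have hsucc : e j.succ = a j.succ + staircase n j := by simp [e, staircase]; ring
    rw [hcs, hsucc]
    exact zpow_sub_zpow_eq_sub_one_mul_sum_Icc (hy0 i)
      (by linarith [ha (Fin.castSucc_le_succ j)]) _
  unfold alternant
  rw [Matrix.det_eq_det_sub_succ_of_row_last_eq_one _ fun j => by simp [hy]]
  simp only [Matrix.of_apply, hentry]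
  refine (Matrix.det_mul_column _ (Matrix.of fun i j : Fin n =>
    ∑ c ∈ Icc (a j.succ) (a j.castSucc), y i.castSucc ^ (c + staircase n j))).trans ?_
  exact congrArg _ (Matrix.det_of_sum_eq_sum_piFinset _ _)

theorem alternant_add_staircase_succ {n : ℕ} {x : Fin (n + 1) → K} (hx0 : ∀ i, x i ≠ 0)
    {a : Fin (n + 1) → ℤ} (ha : Antitone a) :
    alternant x (a + staircase (n + 1)) = (∏ i : Fin n, (x i.castSucc - x (Fin.last n))) *
      ∑ b ∈ interlacing a, alternant (fun i => x i.castSucc) (b + staircase n) *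
        x (Fin.last n) ^ (∑ i, a i - ∑ j, b j) := by
  set t := x (Fin.last n)
  have ht : t ≠ 0 := hx0 _
  have hx : x = fun i => t * (t⁻¹ * x i) := by ext; field_simp
  have hprod : ∏ i : Fin n, (t⁻¹ * x i.castSucc - 1) =
      t ^ (-(n : ℤ)) * ∏ i : Fin n, (x i.castSucc - t) := by
    rw [zpow_neg, zpow_natCast, ← inv_pow, ← Fin.prod_const, ← prod_mul_distrib]
    exact prod_congr rfl fun i _ => by field_simp
  have hexp (b : Fin n → ℤ) : t ^ (∑ j, (a + staircase (n + 1)) j) * t ^ (-(n : ℤ)) *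
      t ^ (-∑ j, (b + staircase n) j) = t ^ (∑ i, a i - ∑ j, b j) := by
    rw [← zpow_add₀ ht, ← zpow_add₀ ht]
    simp only [Pi.add_apply, sum_add_distrib, sum_staircase_succ]
    ring_nf
  rw [congrArg (alternant · _) hx, alternant_const_mul ht,
    alternant_add_staircase_of_last_eq_one (y := fun i => t⁻¹ * x i) (inv_mul_cancel₀ ht)
      (fun i => mul_ne_zero (inv_ne_zero ht) (hx0 _)) ha,
    hprod, mul_sum, mul_sum, mul_sum]
  refine sum_congr rfl fun b _ => ?_
  rw [alternant_const_mul (inv_ne_zero ht), inv_zpow']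
  linear_combination (∏ i : Fin n, (x i.castSucc - t)) *
    alternant (fun i => x i.castSucc) (b + staircase n) * hexp b

theorem alternant_staircase_succ {n : ℕ} {x : Fin (n + 1) → K} (hx0 : ∀ i, x i ≠ 0) :
    alternant x (staircase (n + 1)) = (∏ i : Fin n, (x i.castSucc - x (Fin.last n))) *
      alternant (fun i => x i.castSucc) (staircase n) := by
  simpa [interlacing, ← Pi.zero_def] using
    alternant_add_staircase_succ hx0 (a := 0) antitone_const

end Alternant

/-- Gelfand–Tsetlin branching rule for `U(n+1)`, stated at the level of
characters, which is equivalent to the decomposition of the restriction of the irreducible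
representation: the restriction of the irreducible representation of `U(n+1)` with highest
weight `μ(a₁,…,a_{n+1})` to `U(n) × U(1)` is the multiplicity-free sum of
`μ(b₁,…,b_n) ⊗ μ(b_{n+1})` over all integer sequences with
`a₁ ≥ b₁ ≥ a₂ ≥ b₂ ≥ ⋯ ≥ b_n ≥ a_{n+1}` and `b_{n+1} = ∑ a - ∑ b`.  Evaluated on a
(generic, distinct-eigenvalue, invertible) diagonal element. -/
theorem stmt_13 (n : ℕ) (x : Fin (n + 1) → ℂ) (hx : Function.Injective x)
    (hx0 : ∀ i, x i ≠ 0) (a : Fin (n + 1) → ℤ) (ha : Antitone a) :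
    schurChar (n + 1) x a =
      ∑ b ∈ Fintype.piFinset (fun j : Fin n => Finset.Icc (a j.succ) (a j.castSucc)),
        schurChar n (fun i => x i.castSucc) b *
          (x (Fin.last n)) ^ ((∑ i, a i) - ∑ j, b j) := by
  have hP : ∏ i : Fin n, (x i.castSucc - x (Fin.last n)) ≠ 0 :=
    prod_ne_zero_iff.mpr fun i _ => sub_ne_zero.mpr (hx.ne (Fin.castSucc_lt_last i).ne)
  rw [schurChar_eq_alternant_div, alternant_add_staircase_succ hx0 ha, alternant_staircase_succ hx0,
    mul_div_mul_left _ _ hP, sum_div]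
  refine sum_congr rfl fun b _ => ?_
  rw [schurChar_eq_alternant_div, div_mul_eq_mul_div]
end
end

section
/- Let $x_0 \le x_1 \le \cdots \le x_{2m}$ be positive integers with $x_i < x_{i+1}$ (strictly increasing) and consider the partition of type C given by $(2x_0, 2x_1, \dots, 2x_{2m})$ (a distinguished nilpotent orbit $\check{\mathcal{O}}$ in $sp$). Define $r_{2i+1} = 2(x_{2m-2i} - x_{2m-2i-1} + 1)$ for $0 \le i \le m-1$, $r_{2i} = 2(x_{2m-2i+1} - x_{2m-2i} - 1)$ for $1 \le i \le m$, and $r_{2m+1} = 2x_0 + 1$. Then the partition $(1^{r_1}, 2^{r_2}, \dots, (2m+1)^{r_{2m+1}})$ is a valid partition of $\sum 2x_i + 1$ (all $r_j \ge 0$), its columns (conjugate partition parts) are exactly $(2x_{2m}+1, 2x_{2m-1}-1, 2x_{2m-2}+1, \dots, 2x_1 - 1, 2x_0+1)$, and every odd part except possibly the largest occurs an even number of times while even parts have the stated multiplicities — i.e., odd parts among $1,3,\dots,2m+1$ of sizes $< 2m+1$ occur with even multiplicity $r_{2i+1}$, making the resulting orbit smoothly cuspidal in type B. -/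
/-!
The columns `c_t = ∑_{j ≥ t} r_j` telescope: the formula for `r_t` says precisely that
`r_t = c_t - c_{t+1}` for the claimed values of `c_t`, and `c_{2m+1} = r_{2m+1}`. The size of a
partition is the sum of its columns, here `2 ∑ x_i` plus an alternating sum of `2m+1` signs,
which is `1`. Positivity and evenness are read off the formula for `r_j`.
-/

open Finset

theorem sum_Icc_mul_eq_sum_sum_Icc {R : Type*} [Semiring R] (r : ℕ → R) (n : ℕ) :
    ∑ j ∈ Icc 1 n, (j : R) * r j = ∑ t ∈ Icc 1 n, ∑ j ∈ Icc t n, r j := by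
  rw [sum_comm' (t' := Icc 1 n) (s' := fun j => Icc 1 j)
    (by intro t j; simp only [mem_Icc]; omega)]
  simp

theorem sum_Icc_eq_of_eq_sub_succ {G : Type*} [AddCommGroup G] {r f : ℕ → G} {t n : ℕ}
    (htn : t ≤ n) (hn : r n = f n)
    (hstep : ∀ j, t ≤ j → j < n → r j = f j - f (j + 1)) :
    ∑ j ∈ Icc t n, r j = f t := by
  rw [← Ico_insert_right htn, sum_insert right_notMem_Ico, hn,
    sum_congr rfl fun j hj => (hstep j (mem_Ico.1 hj).1 (mem_Ico.1 hj).2).trans (neg_sub _ _).symm,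
    sum_neg_distrib, sum_Ico_sub f htn]
  abel

theorem sum_Icc_one_reflect {M : Type*} [AddCommMonoid M] (g : ℕ → M) (n : ℕ) :
    ∑ t ∈ Icc 1 n, g (n - t) = ∑ i ∈ range n, g i := by
  refine sum_nbij' (n - ·) (n - ·) ?_ ?_ ?_ ?_ fun _ _ => rfl <;>
    intro a ha <;> simp only [mem_Icc, mem_range] at ha ⊢ <;> omega

theorem sum_Icc_neg_one_pow_succ_odd (m : ℕ) :
    ∑ t ∈ Icc 1 (2 * m + 1), (-1 : ℤ) ^ (t + 1) = 1 := by
  induction m with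
  | zero => simp
  | succ m ih =>
    rw [show 2 * (m + 1) + 1 = 2 * m + 1 + 1 + 1 by ring, sum_Icc_succ_top (by omega),
      sum_Icc_succ_top (by omega), ih]
    ring

theorem stmt_15_general (m : ℕ) (x : ℕ → ℕ)
    (hx : ∀ i, i < 2 * m → x i < x (i + 1)) (r : ℕ → ℤ)
    (hr1 : ∀ j, 1 ≤ j → j ≤ 2 * m →
      r j = 2 * ((x (2 * m - j + 1) : ℤ) - (x (2 * m - j) : ℤ) + (-1) ^ (j + 1)))
    (hr2 : r (2 * m + 1) = 2 * (x 0 : ℤ) + 1) :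
    (∀ j, 1 ≤ j → j ≤ 2 * m + 1 → 0 ≤ r j) ∧
      (∑ j ∈ Finset.Icc 1 (2 * m + 1), (j : ℤ) * r j
        = 2 * (∑ i ∈ Finset.range (2 * m + 1), (x i : ℤ)) + 1) ∧
      (∀ t, 1 ≤ t → t ≤ 2 * m + 1 →
        ∑ j ∈ Finset.Icc t (2 * m + 1), r j
          = 2 * (x (2 * m + 1 - t) : ℤ) + (-1) ^ (t + 1)) ∧
      (∀ i, i < m → Even (r (2 * i + 1))) := by
  have hcol : ∀ t, 1 ≤ t → t ≤ 2 * m + 1 →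
      ∑ j ∈ Icc t (2 * m + 1), r j = 2 * (x (2 * m + 1 - t) : ℤ) + (-1) ^ (t + 1) := by
    intro t ht _
    refine sum_Icc_eq_of_eq_sub_succ
      (f := fun s => 2 * (x (2 * m + 1 - s) : ℤ) + (-1) ^ (s + 1)) ‹_› ?_ fun j htj hj => ?_
    · rw [hr2, Nat.sub_self, Even.neg_one_pow ⟨m + 1, by ring⟩]
    · rw [hr1 j (by omega) (by omega), show 2 * m + 1 - j = 2 * m - j + 1 by omega,
        show 2 * m + 1 - (j + 1) = 2 * m - j by omega, pow_succ _ (j + 1)]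
      ring
  refine ⟨fun j hj hj' => ?_, ?_, hcol, fun i hi => ?_⟩
  · rcases hj'.lt_or_eq with hj' | rfl
    · have hxj : (x (2 * m - j) : ℤ) < x (2 * m - j + 1) := mod_cast hx _ (by omega)
      rw [hr1 j hj (by omega)]
      rcases neg_one_pow_eq_or ℤ (j + 1) with h | h <;> rw [h] <;> linarith
    · rw [hr2]; positivity
  · rw [sum_Icc_mul_eq_sum_sum_Icc,
      sum_congr rfl fun t ht => hcol t (mem_Icc.1 ht).1 (mem_Icc.1 ht).2, sum_add_distrib,
      ← mul_sum, sum_Icc_one_reflect (fun i => (x i : ℤ)), sum_Icc_neg_one_pow_succ_odd]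
  · rw [hr1 (2 * i + 1) (by omega) (by omega)]
    exact even_two_mul _

/-- combinatorial core of Proposition 9.5: let `x_0 < x_1 < ⋯ < x_{2m}` be
positive integers, giving the distinguished type C partition `(2x_0, …, 2x_{2m})`.  Define
`r_{2i+1} = 2(x_{2m-2i} - x_{2m-2i-1} + 1)` (`0 ≤ i ≤ m-1`),
`r_{2i} = 2(x_{2m-2i+1} - x_{2m-2i} - 1)` (`1 ≤ i ≤ m`), and `r_{2m+1} = 2x_0 + 1`
(uniformly, `r_j = 2(x_{2m-j+1} - x_{2m-j} + (-1)^{j+1})` for `1 ≤ j ≤ 2m`).  Then: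
all `r_j ≥ 0`; the partition `(1^{r_1}, 2^{r_2}, …, (2m+1)^{r_{2m+1}})` has total size
`∑ 2x_i + 1`; its columns (conjugate partition parts) `c_t = ∑_{j ≥ t} r_j` are exactly
`(2x_{2m}+1, 2x_{2m-1}-1, 2x_{2m-2}+1, …, 2x_1-1, 2x_0+1)`, i.e.
`c_t = 2 x_{2m+1-t} + (-1)^{t+1}`; and every odd part-size `< 2m+1` occurs an even number
of times (`r_{2i+1}` even for `i < m`), so the resulting type B orbit is smoothly cuspidal. -/
theorem stmt_15 (m : ℕ) (x : ℕ → ℕ) (hx0 : 0 < x 0)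
    (hx : ∀ i, i < 2 * m → x i < x (i + 1)) (r : ℕ → ℤ)
    (hr1 : ∀ j, 1 ≤ j → j ≤ 2 * m →
      r j = 2 * ((x (2 * m - j + 1) : ℤ) - (x (2 * m - j) : ℤ) + (-1) ^ (j + 1)))
    (hr2 : r (2 * m + 1) = 2 * (x 0 : ℤ) + 1) :
    (∀ j, 1 ≤ j → j ≤ 2 * m + 1 → 0 ≤ r j) ∧
      (∑ j ∈ Finset.Icc 1 (2 * m + 1), (j : ℤ) * r j
        = 2 * (∑ i ∈ Finset.range (2 * m + 1), (x i : ℤ)) + 1) ∧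
      (∀ t, 1 ≤ t → t ≤ 2 * m + 1 →
        ∑ j ∈ Finset.Icc t (2 * m + 1), r j
          = 2 * (x (2 * m + 1 - t) : ℤ) + (-1) ^ (t + 1)) ∧
      (∀ i, i < m → Even (r (2 * i + 1))) :=
  stmt_15_general m x hx r hr1 hr2
end
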